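/- arXiv:2312.15378 — 2 statements merged into one kernel-verified Lean document; each statement's English description precedes it below -/
import Mathlib

section
/- Let $\{Y_k\}$ be nonnegative random variables on a probability space with $\mu(Y_k > t) \le a t^{-s}$ for all $t$ large and fixed constants $a > 0$ and $0 < s < 1$. Let $\bar S_N = \sum_{k=1}^N Y_k \mathbf{1}_{\{Y_k < N^{1/s} (\ln N)^{-D}\}}$. If $D(1-s) + \alpha > 1$, then along the dyadic subsequence $N_k = 2^k$, $\bar S_{N_k} / (N_k^{1/s} (\ln N_k)^{\alpha}) \to 0$ almost surely. -/
open MeasureTheory Filter Real Finset Set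

lemma truncExp {Ω : Type*} [MeasurableSpace Ω] (μ : Measure Ω) [IsProbabilityMeasure μ]
    (Y : Ω → ℝ) (hY : Measurable Y) (hpos : ∀ ω, 0 ≤ Y ω)
    (a' s : ℝ) (ha' : 0 < a') (hs0 : 0 < s) (hs1 : s < 1)
    (htail : ∀ t : ℝ, 0 < t → μ {ω | t < Y ω} ≤ ENNReal.ofReal (a' * t ^ (-s)))
    (M : ℝ) (hM : 0 < M) :
    ∫⁻ ω, ENNReal.ofReal (if Y ω < M then Y ω else 0) ∂μ
      ≤ ENNReal.ofReal (a' / (1 - s) * M ^ (1 - s)) := by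
  set Z : Ω → ℝ := fun ω => if Y ω < M then Y ω else 0 with hZ
  have hZmeas : Measurable Z := Measurable.ite (measurableSet_lt hY measurable_const) hY
    measurable_const
  have hZnn : ∀ ω, 0 ≤ Z ω := fun ω => by
    simp only [hZ]; split_ifs; exacts [hpos ω, le_refl 0]
  have hZltM : ∀ ω, Z ω < M := fun ω => by
    simp only [hZ]; split_ifs with h; exacts [h, hM]
  have hZleY : ∀ ω, Z ω ≤ Y ω := fun ω => by
    simp only [hZ]; split_ifs; exacts [le_refl _, hpos ω]
  rw [lintegral_eq_lintegral_meas_lt μ (Filter.Eventually.of_forall hZnn) hZmeas.aemeasurable]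
  have hbound : ∀ t ∈ Ioi (0:ℝ), μ {ω | t < Z ω}
      ≤ (Ioo (0:ℝ) M).indicator (fun t => ENNReal.ofReal (a' * t ^ (-s))) t := by
    intro t ht
    by_cases htM : t < M
    · rw [Set.indicator_of_mem (Set.mem_Ioo.mpr ⟨ht, htM⟩)]
      refine le_trans (measure_mono ?_) (htail t ht)
      intro ω hω
      exact lt_of_lt_of_le hω (hZleY ω)
    · have : {ω | t < Z ω} = ∅ := Set.eq_empty_iff_forall_notMem.mpr fun ω hω =>
        absurd (lt_trans (lt_of_lt_of_le (hZltM ω) (not_lt.mp htM)) hω) (lt_irrefl (Z ω))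
      rw [this, measure_empty]
      exact zero_le
  calc ∫⁻ t in Ioi (0:ℝ), μ {ω | t < Z ω}
      ≤ ∫⁻ t in Ioi (0:ℝ),
          (Ioo (0:ℝ) M).indicator (fun t => ENNReal.ofReal (a' * t ^ (-s))) t :=
        setLIntegral_mono_ae (by measurability) (Filter.Eventually.of_forall hbound)
    _ = ∫⁻ t in Ioo (0:ℝ) M, ENNReal.ofReal (a' * t ^ (-s)) := by
        rw [lintegral_indicator measurableSet_Ioo, Measure.restrict_restrict measurableSet_Ioo]
        congr 1
        rw [Set.Ioo_inter_Ioi]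
        simp
    _ = ENNReal.ofReal (∫ t in Ioo (0:ℝ) M, a' * t ^ (-s)) := by
        rw [ofReal_integral_eq_lintegral_ofReal]
        · refine Integrable.const_mul ?_ a'
          have h := intervalIntegral.intervalIntegrable_rpow' (a := 0) (b := M)
              (r := -s) (by linarith)
          rw [intervalIntegrable_iff_integrableOn_Ioo_of_le hM.le] at h
          exact h
        · filter_upwards [ae_restrict_mem measurableSet_Ioo] with t ht
          exact mul_nonneg ha'.le (Real.rpow_nonneg ht.1.le _)
    _ ≤ ENNReal.ofReal (a' / (1 - s) * M ^ (1 - s)) := by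
        apply ENNReal.ofReal_le_ofReal
        rw [← integral_Ioc_eq_integral_Ioo, ← intervalIntegral.integral_of_le hM.le,
          intervalIntegral.integral_const_mul, integral_rpow (Or.inl (by linarith))]
        rw [Real.zero_rpow (fun h => by linarith), show -s + 1 = 1 - s by ring]
        rw [sub_zero]
        ring_nf
        exact le_refl _

/-- Small-values control in the infinite-expectation regime `s < 1`
(equation (SmallVal) along the dyadic subsequence): if the `Y_k` are nonnegative
with tail `μ(Y_k > t) ≤ a t^{-s}`, `0 < s < 1`, and
`D(1-s) + α > 1`, then the truncated sums satisfy the small-value bound. -/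
theorem stmt3
    {Ω : Type*} [MeasurableSpace Ω] (μ : Measure Ω) [IsProbabilityMeasure μ]
    (Y : ℕ → Ω → ℝ) (hmeas : ∀ k, Measurable (Y k)) (hpos : ∀ k ω, 0 ≤ Y k ω)
    (a s D α : ℝ) (ha : 0 < a) (hs0 : 0 < s) (hs1 : s < 1)
    (htail : ∃ t₀ : ℝ, ∀ (k : ℕ) (t : ℝ), t₀ ≤ t →
      μ {ω | t < Y k ω} ≤ ENNReal.ofReal (a * t ^ (-s)))
    (hDα : 1 < D * (1 - s) + α) :
    ∀ᵐ ω ∂μ, Filter.Tendsto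
      (fun k : ℕ =>
        (∑ n ∈ Finset.Icc 1 (2 ^ k),
            (if Y n ω < ((2 : ℝ) ^ k) ^ (1 / s) * (Real.log ((2 : ℝ) ^ k)) ^ (-D)
              then Y n ω else 0))
          / (((2 : ℝ) ^ k) ^ (1 / s) * (Real.log ((2 : ℝ) ^ k)) ^ α))
      Filter.atTop (nhds 0) := by
  obtain ⟨t₀, ht₀⟩ := htail
  set t₁ : ℝ := max t₀ 1 with ht₁def
  set a' : ℝ := max a (t₁ ^ s) with ha'def
  have ha' : 0 < a' := lt_of_lt_of_le ha (le_max_left _ _)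
  have ht₁1 : (1:ℝ) ≤ t₁ := le_max_right _ _
  have htail' : ∀ (n : ℕ) (t : ℝ), 0 < t →
      μ {ω | t < Y n ω} ≤ ENNReal.ofReal (a' * t ^ (-s)) := by
    intro n t ht
    rcases le_or_gt t₁ t with h | h
    · refine le_trans (ht₀ n t (le_trans (le_max_left _ _) h)) ?_
      exact ENNReal.ofReal_le_ofReal (by
        have := Real.rpow_nonneg ht.le (-s)
        exact mul_le_mul_of_nonneg_right (le_max_left _ _) this)
    · have h1 : (1:ℝ) ≤ a' * t ^ (-s) := by
        have htt : t ^ s ≤ t₁ ^ s :=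
          Real.rpow_le_rpow ht.le h.le hs0.le
        have hts : 0 < t ^ s := Real.rpow_pos_of_pos ht s
        have : t₁ ^ s * t ^ (-s) ≥ 1 := by
          rw [Real.rpow_neg ht.le, ge_iff_le, ← div_eq_mul_inv, le_div_iff₀ hts, one_mul]
          exact htt
        refine le_trans this (mul_le_mul_of_nonneg_right (le_max_right _ _) ?_)
        exact Real.rpow_nonneg ht.le _
      calc μ {ω | t < Y n ω} ≤ 1 := prob_le_one
        _ = ENNReal.ofReal 1 := ENNReal.ofReal_one.symm
        _ ≤ _ := ENNReal.ofReal_le_ofReal h1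
  set p : ℝ := D * (1 - s) + α with hpdef
  set C : ℝ := a' / (1 - s) with hCdef
  have hC : 0 < C := div_pos ha' (by linarith)
  set M : ℕ → ℝ := fun k => ((2:ℝ)^k) ^ (1/s) * (Real.log ((2:ℝ)^k)) ^ (-D) with hMdef
  set den : ℕ → ℝ := fun k => ((2:ℝ)^k) ^ (1/s) * (Real.log ((2:ℝ)^k)) ^ α with hdendef
  have hlogN : ∀ k : ℕ, Real.log ((2:ℝ)^k) = (k:ℝ) * Real.log 2 := fun k => by rw [Real.log_pow]
  have hB : ∀ k : ℕ, (0:ℝ) < (2:ℝ)^k := fun k => by positivity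
  have hL : ∀ k : ℕ, 1 ≤ k → (0:ℝ) < (k:ℝ) * Real.log 2 := fun k hk =>
    mul_pos (by exact_mod_cast Nat.lt_of_lt_of_le Nat.zero_lt_one hk) (Real.log_pos one_lt_two)
  have hMpos : ∀ k : ℕ, 1 ≤ k → 0 < M k := by
    intro k hk
    refine mul_pos (Real.rpow_pos_of_pos (hB k) _) ?_
    rw [hlogN k]
    exact Real.rpow_pos_of_pos (hL k hk) _
  have hdenpos : ∀ k : ℕ, 1 ≤ k → 0 < den k := by
    intro k hk
    refine mul_pos (Real.rpow_pos_of_pos (hB k) _) ?_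
    rw [hlogN k]
    exact Real.rpow_pos_of_pos (hL k hk) _
  -- numerator
  set num : ℕ → Ω → ℝ := fun k ω =>
    ∑ n ∈ Finset.Icc 1 (2^k), (if Y n ω < M k then Y n ω else 0) with hnumdef
  have hnum_nn : ∀ k ω, 0 ≤ num k ω := by
    intro k ω
    refine Finset.sum_nonneg fun n _ => ?_
    split_ifs; exacts [hpos n ω, le_refl 0]
  have hnum_meas : ∀ k, Measurable (num k) :=
    fun k => Finset.measurable_sum _ fun n _ =>
      Measurable.ite (measurableSet_lt (hmeas n) measurable_const) (hmeas n) measurable_const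
  -- expectation bound
  have hE : ∀ k : ℕ, 1 ≤ k → ∫⁻ ω, ENNReal.ofReal (num k ω) ∂μ
      ≤ ENNReal.ofReal ((2^k : ℝ) * (C * (M k) ^ (1-s))) := by
    intro k hk
    have heq : ∀ ω, ENNReal.ofReal (num k ω)
        = ∑ n ∈ Finset.Icc 1 (2^k), ENNReal.ofReal (if Y n ω < M k then Y n ω else 0) := by
      intro ω
      exact ENNReal.ofReal_sum_of_nonneg fun n _ => by
        split_ifs; exacts [hpos n ω, le_refl 0]
    simp only [heq]
    rw [lintegral_finset_sum _ (fun n _ =>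
      (Measurable.ite (measurableSet_lt (hmeas n) measurable_const) (hmeas n)
        measurable_const).ennreal_ofReal)]
    calc ∑ n ∈ Finset.Icc 1 (2^k), ∫⁻ ω, ENNReal.ofReal (if Y n ω < M k then Y n ω else 0) ∂μ
        ≤ ∑ n ∈ Finset.Icc 1 (2^k), ENNReal.ofReal (C * (M k) ^ (1-s)) := by
          refine Finset.sum_le_sum fun n _ => ?_
          have := truncExp μ (Y n) (hmeas n) (hpos n) a' s ha' hs0 hs1 (htail' n)
            (M k) (hMpos k hk)
          rwa [← hCdef] at this
      _ = (2^k : ℕ) • ENNReal.ofReal (C * (M k) ^ (1-s)) := by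
          rw [Finset.sum_const, Nat.card_Icc]
          norm_num
      _ = ENNReal.ofReal ((2^k : ℝ) * (C * (M k) ^ (1-s))) := by
          rw [nsmul_eq_mul, show ((2:ℝ)^k) = ((2^k : ℕ) : ℝ) by push_cast; ring]
          conv_rhs => rw [ENNReal.ofReal_mul (by positivity)]
          rw [ENNReal.ofReal_natCast]
  -- Markov
  set A : ℕ → ℕ → Set Ω := fun m k => {ω | 1/((m:ℝ)+1) * den k ≤ num k ω} with hAdef
  have hMar : ∀ m k : ℕ, 1 ≤ k →
      μ (A m k) ≤ ENNReal.ofReal (((m:ℝ)+1) * C * (((k:ℝ)) * Real.log 2) ^ (-p)) := by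
    intro m k hk
    have hm1 : (0:ℝ) < (m:ℝ)+1 := by positivity
    have hεd : 0 < 1/((m:ℝ)+1) * den k := mul_pos (by positivity) (hdenpos k hk)
    have hsub : A m k ⊆ {ω | ENNReal.ofReal (1/((m:ℝ)+1) * den k) ≤ ENNReal.ofReal (num k ω)} :=
      fun ω h => ENNReal.ofReal_le_ofReal h
    have h1 := mul_meas_ge_le_lintegral₀ (μ := μ) ((hnum_meas k).ennreal_ofReal.aemeasurable)
      (ENNReal.ofReal (1/((m:ℝ)+1) * den k))
    have h2 : μ (A m k) ≤ ENNReal.ofReal ((2^k : ℝ) * (C * (M k) ^ (1-s)))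
        / ENNReal.ofReal (1/((m:ℝ)+1) * den k) := by
      rw [ENNReal.le_div_iff_mul_le (Or.inl (ENNReal.ofReal_pos.mpr hεd).ne')
        (Or.inl ENNReal.ofReal_ne_top)]
      calc μ (A m k) * ENNReal.ofReal (1/((m:ℝ)+1) * den k)
          ≤ μ {ω | ENNReal.ofReal (1/((m:ℝ)+1) * den k) ≤ ENNReal.ofReal (num k ω)}
            * ENNReal.ofReal (1/((m:ℝ)+1) * den k) :=
            mul_le_mul_left (measure_mono hsub) _
        _ = ENNReal.ofReal (1/((m:ℝ)+1) * den k)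
            * μ {ω | ENNReal.ofReal (1/((m:ℝ)+1) * den k) ≤ ENNReal.ofReal (num k ω)} :=
            mul_comm _ _
        _ ≤ ∫⁻ ω, ENNReal.ofReal (num k ω) ∂μ := h1
        _ ≤ _ := hE k hk
    rw [← ENNReal.ofReal_div_of_pos hεd] at h2
    refine le_trans h2 (ENNReal.ofReal_le_ofReal (le_of_eq ?_))
    -- real computation
    have hBk := hB k
    have hLk := hL k hk
    set L : ℝ := (k:ℝ) * Real.log 2 with hLdef
    have hBs : (0:ℝ) < ((2:ℝ)^k) ^ (1/s) := Real.rpow_pos_of_pos hBk _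
    have e1 : (M k) ^ (1-s) = ((2:ℝ)^k) ^ ((1/s)*(1-s)) * L ^ (-D*(1-s)) := by
      simp only [hMdef, hlogN k, ← hLdef]
      rw [Real.mul_rpow (Real.rpow_nonneg hBk.le _) (Real.rpow_nonneg hLk.le _),
        ← Real.rpow_mul hBk.le, ← Real.rpow_mul hLk.le]
    have e2 : (2:ℝ)^k * ((2:ℝ)^k) ^ ((1/s)*(1-s)) = ((2:ℝ)^k) ^ (1/s) := by
      nth_rewrite 1 [← Real.rpow_one ((2:ℝ)^k)]
      rw [← Real.rpow_add hBk]
      congr 1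
      field_simp
      ring
    have e3 : L ^ (-D*(1-s)) / L ^ α = L ^ (-p) := by
      rw [← Real.rpow_sub hLk]
      congr 1
      simp only [hpdef]; ring
    have hnum_eq : (2^k : ℝ) * (C * (M k) ^ (1-s))
        = C * (((2:ℝ)^k) ^ (1/s) * L ^ (-D*(1-s))) := by
      rw [e1, ← e2]; ring
    have hden_eq : 1/((m:ℝ)+1) * den k = 1/((m:ℝ)+1) * (((2:ℝ)^k) ^ (1/s) * L ^ α) := by
      simp only [hdendef, hlogN k, ← hLdef]
    rw [hnum_eq, hden_eq]
    have hLα : (0:ℝ) < L ^ α := Real.rpow_pos_of_pos hLk _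
    have e4 : C * (((2:ℝ)^k) ^ (1/s) * L ^ (-D*(1-s))) / (1/((m:ℝ)+1) * (((2:ℝ)^k) ^ (1/s) * L ^ α))
        = ((m:ℝ)+1) * C * (L ^ (-D*(1-s)) / L ^ α) := by
      field_simp
    rw [e4, e3]
  -- summability
  have hsum : ∀ m : ℕ, (∑' k, μ (A m k)) ≠ ⊤ := by
    intro m
    set g : ℕ → ℝ := fun k => if k = 0 then 1 else ((m:ℝ)+1) * C * (((k:ℝ)) * Real.log 2) ^ (-p)
      with hgdef
    have hgnn : ∀ k, 0 ≤ g k := by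
      intro k
      simp only [hgdef]
      split_ifs
      · exact zero_le_one
      · positivity
    have hμg : ∀ k, μ (A m k) ≤ ENNReal.ofReal (g k) := by
      intro k
      rcases Nat.eq_zero_or_pos k with rfl | hk
      · simp only [hgdef, if_pos rfl, ENNReal.ofReal_one]
        exact prob_le_one
      · have := hMar m k hk
        simp only [hgdef, if_neg (Nat.pos_iff_ne_zero.mp hk)]
        exact this
    have hgsum : Summable g := by
      have hp1 : -p < -1 := by simp only [hpdef]; linarith
      have h1 : Summable (fun k : ℕ => (((m:ℝ)+1) * C * (Real.log 2) ^ (-p)) * ((k:ℝ)) ^ (-p)) :=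
        (Real.summable_nat_rpow.mpr hp1).mul_left _
      refine (summable_nat_add_iff 1).mp ?_
      refine ((summable_nat_add_iff 1).mpr h1).congr fun n => ?_
      have hn1 : ((n:ℝ)+1) ≥ 0 := by positivity
      simp only [hgdef, if_neg (Nat.succ_ne_zero n)]
      push_cast
      rw [Real.mul_rpow hn1 (Real.log_nonneg one_le_two)]
      ring
    have hle : (∑' k, μ (A m k)) ≤ ENNReal.ofReal (∑' k, g k) := by
      calc (∑' k, μ (A m k)) ≤ ∑' k, ENNReal.ofReal (g k) := ENNReal.tsum_le_tsum hμg
        _ = ENNReal.ofReal (∑' k, g k) := (ENNReal.ofReal_tsum_of_nonneg hgnn hgsum).symm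
    exact (lt_of_le_of_lt hle ENNReal.ofReal_lt_top).ne
  -- Borel-Cantelli
  have hBC : ∀ᵐ ω ∂μ, ∀ m : ℕ, ∀ᶠ k in atTop, ω ∉ A m k :=
    (ae_all_iff).mpr fun m => ae_eventually_notMem (hsum m)
  filter_upwards [hBC] with ω hω
  refine Metric.tendsto_atTop.mpr fun ε hε => ?_
  obtain ⟨m, hm⟩ := exists_nat_one_div_lt hε
  have hev := (hω m).and (eventually_ge_atTop 1)
  rw [eventually_atTop] at hev
  obtain ⟨N, hN⟩ := hev
  refine ⟨N, fun k hk => ?_⟩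
  obtain ⟨hnot, hk1⟩ := hN k hk
  have hd := hdenpos k hk1
  have hnn := hnum_nn k ω
  have hlt : num k ω < 1/((m:ℝ)+1) * den k := not_le.mp hnot
  show dist (num k ω / den k) 0 < ε
  rw [Real.dist_eq, sub_zero, abs_of_nonneg (div_nonneg hnn hd.le)]
  calc num k ω / den k < 1/((m:ℝ)+1) := (div_lt_iff₀ hd).mpr (by linarith)
    _ < ε := hm
end

section
/- Abstract lower-bound step for $(M4)$: let $\{E_k\}_{k \in S}$ be events indexed by a finite set $S$ partitioned into blocks $S_1, \dots, S_r$ (corresponding to $k/N \in I_j$), and let $A$ be the event that for each $j$ there exists $k \in S_j$ with $E_k$ occurring. Then $\mu(A) \ge \sum_{(k_1,\dots,k_r) \in S_1 \times \cdots \times S_r} \mu(E_{k_1} \cap \cdots \cap E_{k_r}) - \sum_{t=r+1}^{2r} \bar\tau_t$, where $\bar\tau_t$ is the sum over $t$-tuples of distinct indices (with at least one index from each block) of the probabilities of the $t$-fold intersections. -/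
open MeasureTheory Finset

lemma pair_eq_aux {α : Type*} [DecidableEq α] {a b c : α}
    (h : ({a, b} : Finset α) = {a, c}) : b = c := by
  have hb : b ∈ ({a, c} : Finset α) := h ▸ (by simp)
  have hc : c ∈ ({a, b} : Finset α) := h.symm ▸ (by simp)
  simp only [Finset.mem_insert, Finset.mem_singleton] at hb hc
  rcases hb with hb | hb
  · rcases hc with hc | hc
    · rw [hb, hc]
    · exact hc.symm
  · exact hb

lemma core_count (r : ℕ) (hr : 1 ≤ r) (K : Fin r → Finset ℕ)
    (hdisj : ∀ i j : Fin r, i ≠ j → Disjoint (K i) (K j))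
    (hne : ∀ j, (K j).Nonempty) :
    (Fintype.piFinset K).card ≤
      1 + ∑ t ∈ Finset.Icc (r + 1) (2 * r),
        (((Finset.univ.biUnion K).powersetCard t).filter
          (fun T => ∀ j : Fin r, (T ∩ K j).Nonempty)).card := by
  classical
  set κ0 : Fin r → ℕ := fun j => (K j).min' (hne j) with hκ0
  have hκ0mem : ∀ j, κ0 j ∈ K j := fun j => (K j).min'_mem (hne j)
  have hκ0pi : κ0 ∈ Fintype.piFinset K := by
    simp [Fintype.mem_piFinset, hκ0mem]
  have hblock : ∀ (κ : Fin r → ℕ), (∀ j, κ j ∈ K j) → ∀ i j, κ i ∈ K j → i = j := by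
    intro κ hκ i j hij
    by_contra hne'
    exact Finset.disjoint_left.mp (hdisj i j hne') (hκ i) hij
  set B : ℕ → Finset (Finset ℕ) := fun t =>
    ((Finset.univ.biUnion K).powersetCard t).filter
      (fun T => ∀ j : Fin r, (T ∩ K j).Nonempty) with hB
  have hBcard : ∀ t T, T ∈ B t → T.card = t := by
    intro t T hT
    exact (Finset.mem_powersetCard.mp (Finset.mem_filter.mp hT).1).2
  have hsum : ∑ t ∈ Finset.Icc (r + 1) (2 * r), (B t).card
      = ((Finset.Icc (r + 1) (2 * r)).biUnion B).card := by
    rw [Finset.card_biUnion]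
    intro t ht t' ht' htt'
    apply Finset.disjoint_left.mpr
    intro T hT hT'
    exact htt' ((hBcard t T hT).symm.trans (hBcard t' T hT'))
  set Φ : (Fin r → ℕ) → Finset ℕ :=
    fun κ => (Finset.univ.image κ0) ∪ (Finset.univ.image κ) with hΦ
  have hκ0inj : Function.Injective κ0 := by
    intro i j h
    exact hblock κ0 hκ0mem i j (h ▸ hκ0mem j)
  have himcard : (Finset.univ.image κ0).card = r := by
    rw [Finset.card_image_of_injective _ hκ0inj, Finset.card_univ, Fintype.card_fin]
  have hinter : ∀ (κ : Fin r → ℕ), (∀ j, κ j ∈ K j) →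
      ∀ j, Φ κ ∩ K j = {κ0 j, κ j} := by
    intro κ hκ j
    ext x
    simp only [hΦ, Finset.mem_inter, Finset.mem_union, Finset.mem_image,
      Finset.mem_univ, true_and, Finset.mem_insert, Finset.mem_singleton]
    constructor
    · rintro ⟨⟨i, rfl⟩ | ⟨i, rfl⟩, hx⟩
      · exact Or.inl (by rw [hblock κ0 hκ0mem i j hx])
      · exact Or.inr (by rw [hblock κ hκ i j hx])
    · rintro (rfl | rfl)
      · exact ⟨Or.inl ⟨j, rfl⟩, hκ0mem j⟩
      · exact ⟨Or.inr ⟨j, rfl⟩, hκ j⟩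
  have hmaps : ∀ κ ∈ (Fintype.piFinset K).erase κ0,
      Φ κ ∈ (Finset.Icc (r + 1) (2 * r)).biUnion B := by
    intro κ hκ'
    have hκne : κ ≠ κ0 := Finset.ne_of_mem_erase hκ'
    have hκ : ∀ j, κ j ∈ K j := by
      have := Finset.mem_of_mem_erase hκ'
      simpa [Fintype.mem_piFinset] using this
    have hsub : Φ κ ⊆ Finset.univ.biUnion K := by
      intro x hx
      simp only [hΦ, Finset.mem_union, Finset.mem_image, Finset.mem_univ, true_and] at hx
      rcases hx with ⟨i, rfl⟩ | ⟨i, rfl⟩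
      · exact Finset.mem_biUnion.mpr ⟨i, Finset.mem_univ i, hκ0mem i⟩
      · exact Finset.mem_biUnion.mpr ⟨i, Finset.mem_univ i, hκ i⟩
    have hub : (Φ κ).card ≤ 2 * r := by
      calc (Φ κ).card ≤ (Finset.univ.image κ0).card + (Finset.univ.image κ).card :=
            Finset.card_union_le _ _
        _ ≤ r + r := by
            refine Nat.add_le_add (le_of_eq himcard) ?_
            calc (Finset.univ.image κ).card ≤ (Finset.univ : Finset (Fin r)).card :=
              Finset.card_image_le
              _ = r := by rw [Finset.card_univ, Fintype.card_fin]
        _ = 2 * r := by ring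
    have hlb : r + 1 ≤ (Φ κ).card := by
      obtain ⟨j, hj⟩ : ∃ j, κ j ≠ κ0 j := by
        by_contra h
        push_neg at h
        exact hκne (funext h)
      have hnotmem : κ j ∉ Finset.univ.image κ0 := by
        simp only [Finset.mem_image, Finset.mem_univ, true_and, not_exists]
        intro i hi
        have hKi : κ j ∈ K i := hi ▸ hκ0mem i
        have hji : j = i := hblock κ hκ j i hKi
        subst hji
        exact hj hi.symm
      have hins : insert (κ j) (Finset.univ.image κ0) ⊆ Φ κ := by
        intro x hx
        rcases Finset.mem_insert.mp hx with rfl | hx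
        · exact Finset.mem_union_right _ (Finset.mem_image.mpr ⟨j, Finset.mem_univ j, rfl⟩)
        · exact Finset.mem_union_left _ hx
      calc r + 1 = (insert (κ j) (Finset.univ.image κ0)).card := by
            rw [Finset.card_insert_of_notMem hnotmem, himcard]
        _ ≤ (Φ κ).card := Finset.card_le_card hins
    refine Finset.mem_biUnion.mpr ⟨(Φ κ).card, Finset.mem_Icc.mpr ⟨hlb, hub⟩, ?_⟩
    refine Finset.mem_filter.mpr ⟨Finset.mem_powersetCard.mpr ⟨hsub, rfl⟩, ?_⟩
    intro j
    exact ⟨κ0 j, by rw [hinter κ hκ j]; simp⟩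
  have hinj : Set.InjOn Φ ((Fintype.piFinset K).erase κ0 : Finset (Fin r → ℕ)) := by
    intro κ hκm κ' hκm' h
    have hκ : ∀ j, κ j ∈ K j := by
      have := Finset.mem_of_mem_erase (by exact_mod_cast hκm)
      simpa [Fintype.mem_piFinset] using this
    have hκ'h : ∀ j, κ' j ∈ K j := by
      have := Finset.mem_of_mem_erase (by exact_mod_cast hκm')
      simpa [Fintype.mem_piFinset] using this
    funext j
    have h1 := hinter κ hκ j
    have h2 := hinter κ' hκ'h j
    have hp : ({κ0 j, κ j} : Finset ℕ) = {κ0 j, κ' j} := by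
      rw [← h1, ← h2, h]
    exact pair_eq_aux hp
  have hcard : ((Fintype.piFinset K).erase κ0).card
      ≤ ((Finset.Icc (r + 1) (2 * r)).biUnion B).card :=
    Finset.card_le_card_of_injOn Φ hmaps hinj
  have hpos : 1 ≤ (Fintype.piFinset K).card := Finset.card_pos.mpr ⟨κ0, hκ0pi⟩
  have herase := Finset.card_erase_of_mem hκ0pi
  rw [hsum]
  omega
open MeasureTheory Finset

/-- Bonferroni-type lower bound (M4Lower): for events `E_k` indexed by pairwise
disjoint blocks `S 1, …, S r`, the probability of the event `A` that each block
contains an index whose event occurs is at least the sum over all block-tuples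
of the `r`-fold intersection probabilities, minus the correction sums `τ_t`
(`r+1 ≤ t ≤ 2r`) over `t`-element index sets meeting every block. -/
theorem stmt18
    {Ω : Type*} [MeasurableSpace Ω] (μ : Measure Ω) [IsProbabilityMeasure μ]
    (r : ℕ) (hr : 1 ≤ r) (S : Fin r → Finset ℕ)
    (hdisj : ∀ i j : Fin r, i ≠ j → Disjoint (S i) (S j))
    (E : ℕ → Set Ω) (hE : ∀ k, MeasurableSet (E k)) :
    (∑ κ ∈ Fintype.piFinset S, (μ (⋂ j, E (κ j))).toReal)
      - (∑ t ∈ Finset.Icc (r + 1) (2 * r),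
          ∑ T ∈ ((Finset.univ.biUnion S).powersetCard t).filter
              (fun T => ∀ j : Fin r, (T ∩ S j).Nonempty),
            (μ (⋂ k ∈ T, E k)).toReal)
      ≤ (μ {ω | ∀ j : Fin r, ∃ k ∈ S j, ω ∈ E k}).toReal := by
  classical
  set A : Set Ω := {ω | ∀ j : Fin r, ∃ k ∈ S j, ω ∈ E k} with hA
  have hAmeas : MeasurableSet A := by
    have hA' : A = ⋂ j, ⋃ k ∈ S j, E k := by
      ext ω
      simp [hA, Set.mem_iInter]
    rw [hA']
    exact MeasurableSet.iInter fun j =>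
      (S j).measurableSet_biUnion fun k _ => hE k
  have hmeas1 : ∀ κ : Fin r → ℕ, MeasurableSet (⋂ j, E (κ j)) :=
    fun κ => MeasurableSet.iInter fun j => hE _
  have hmeas2 : ∀ T : Finset ℕ, MeasurableSet (⋂ k ∈ T, E k) :=
    fun T => MeasurableSet.iInter fun k => MeasurableSet.iInter fun _ => hE k
  have hint : ∀ (s : Set Ω), MeasurableSet s →
      Integrable (s.indicator (1 : Ω → ℝ)) μ :=
    fun s hs => (integrable_const (1 : ℝ)).indicator hs
  -- the pointwise inequality
  have key : ∀ ω : Ω,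
      (∑ κ ∈ Fintype.piFinset S, (⋂ j, E (κ j)).indicator (1 : Ω → ℝ) ω)
        ≤ A.indicator (1 : Ω → ℝ) ω
          + ∑ t ∈ Finset.Icc (r + 1) (2 * r),
              ∑ T ∈ ((Finset.univ.biUnion S).powersetCard t).filter
                  (fun T => ∀ j : Fin r, (T ∩ S j).Nonempty),
                (⋂ k ∈ T, E k).indicator (1 : Ω → ℝ) ω := by
    intro ω
    simp only [Set.indicator_apply, Set.mem_iInter, Pi.one_apply]
    rw [Finset.sum_boole]
    have hrw2 : ∀ t, (∑ T ∈ ((Finset.univ.biUnion S).powersetCard t).filter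
          (fun T => ∀ j : Fin r, (T ∩ S j).Nonempty),
            (if ∀ k ∈ T, ω ∈ E k then (1 : ℝ) else 0))
        = ((((Finset.univ.biUnion S).powersetCard t).filter
            (fun T => ∀ j : Fin r, (T ∩ S j).Nonempty)).filter
            (fun T => ∀ k ∈ T, ω ∈ E k)).card := by
      intro t
      rw [Finset.sum_boole]
    simp only [hrw2]
    by_cases hωA : ω ∈ A
    · -- main case
      have hind : A.indicator (1 : Ω → ℝ) ω = 1 := Set.indicator_of_mem hωA 1
      rw [if_pos hωA]
      set K : Fin r → Finset ℕ := fun j => (S j).filter (fun k => ω ∈ E k) with hK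
      have hKsub : ∀ j, K j ⊆ S j := fun j => Finset.filter_subset _ _
      have hKdisj : ∀ i j : Fin r, i ≠ j → Disjoint (K i) (K j) := fun i j hij =>
        Finset.disjoint_of_subset_left (hKsub i)
          (Finset.disjoint_of_subset_right (hKsub j) (hdisj i j hij))
      have hKne : ∀ j, (K j).Nonempty := by
        intro j
        obtain ⟨k, hk1, hk2⟩ := hωA j
        exact ⟨k, Finset.mem_filter.mpr ⟨hk1, hk2⟩⟩
      have hfilter : (Fintype.piFinset S).filter (fun κ => ∀ j, ω ∈ E (κ j))
          = Fintype.piFinset K := by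
        ext κ
        simp only [Finset.mem_filter, Fintype.mem_piFinset, hK]
        exact forall_and.symm
      rw [hfilter]
      -- compare per-t counts with K-version
      have hle : ∀ t, (((Finset.univ.biUnion K).powersetCard t).filter
            (fun T => ∀ j : Fin r, (T ∩ K j).Nonempty)).card
          ≤ ((((Finset.univ.biUnion S).powersetCard t).filter
              (fun T => ∀ j : Fin r, (T ∩ S j).Nonempty)).filter
              (fun T => ∀ k ∈ T, ω ∈ E k)).card := by
        intro t
        apply Finset.card_le_card
        intro T hT
        obtain ⟨hT1, hT2⟩ := Finset.mem_filter.mp hT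
        obtain ⟨hTsub, hTcard⟩ := Finset.mem_powersetCard.mp hT1
        have hTgood : ∀ k ∈ T, ω ∈ E k := by
          intro k hk
          obtain ⟨i, _, hki⟩ := Finset.mem_biUnion.mp (hTsub hk)
          exact (Finset.mem_filter.mp hki).2
        refine Finset.mem_filter.mpr ⟨Finset.mem_filter.mpr ⟨?_, ?_⟩, hTgood⟩
        · refine Finset.mem_powersetCard.mpr ⟨?_, hTcard⟩
          intro k hk
          obtain ⟨i, _, hki⟩ := Finset.mem_biUnion.mp (hTsub hk)
          exact Finset.mem_biUnion.mpr ⟨i, Finset.mem_univ i, hKsub i hki⟩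
        · intro j
          obtain ⟨k, hk⟩ := hT2 j
          obtain ⟨hk1, hk2⟩ := Finset.mem_inter.mp hk
          exact ⟨k, Finset.mem_inter.mpr ⟨hk1, hKsub j hk2⟩⟩
      have hcore := core_count r hr K hKdisj hKne
      have hchain : (Fintype.piFinset K).card
          ≤ 1 + ∑ t ∈ Finset.Icc (r + 1) (2 * r),
              ((((Finset.univ.biUnion S).powersetCard t).filter
                (fun T => ∀ j : Fin r, (T ∩ S j).Nonempty)).filter
                (fun T => ∀ k ∈ T, ω ∈ E k)).card :=
        hcore.trans (Nat.add_le_add_left (Finset.sum_le_sum fun t _ => hle t) 1)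
      calc ((Fintype.piFinset K).card : ℝ)
          ≤ ((1 + ∑ t ∈ Finset.Icc (r + 1) (2 * r),
              ((((Finset.univ.biUnion S).powersetCard t).filter
                (fun T => ∀ j : Fin r, (T ∩ S j).Nonempty)).filter
                (fun T => ∀ k ∈ T, ω ∈ E k)).card : ℕ) : ℝ) := by
            exact_mod_cast hchain
        _ = 1 + ∑ t ∈ Finset.Icc (r + 1) (2 * r),
              (((((Finset.univ.biUnion S).powersetCard t).filter
                (fun T => ∀ j : Fin r, (T ∩ S j).Nonempty)).filter
                (fun T => ∀ k ∈ T, ω ∈ E k)).card : ℝ) := by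
            push_cast
            ring
    · -- ω ∉ A
      have hind : A.indicator (1 : Ω → ℝ) ω = 0 := Set.indicator_of_notMem hωA 1
      rw [if_neg hωA]
      obtain ⟨j0, hj0⟩ : ∃ j : Fin r, ∀ k ∈ S j, ω ∉ E k := by
        by_contra h
        push_neg at h
        exact hωA (fun j => h j)
      have hzero : ((Fintype.piFinset S).filter (fun κ => ∀ j, ω ∈ E (κ j))).card = 0 := by
        rw [Finset.card_eq_zero]
        apply Finset.filter_false_of_mem
        intro κ hκ hall
        exact hj0 (κ j0) ((Fintype.mem_piFinset.mp hκ) j0) (hall j0)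
      rw [hzero, Nat.cast_zero, zero_add]
      exact Finset.sum_nonneg fun t _ => Nat.cast_nonneg _
  -- integrate
  have hi1 : Integrable (fun ω => ∑ κ ∈ Fintype.piFinset S,
      (⋂ j, E (κ j)).indicator (1 : Ω → ℝ) ω) μ :=
    integrable_finset_sum _ (fun κ _ => hint _ (hmeas1 κ))
  have hi2 : Integrable (fun ω => A.indicator (1 : Ω → ℝ) ω
      + ∑ t ∈ Finset.Icc (r + 1) (2 * r),
          ∑ T ∈ ((Finset.univ.biUnion S).powersetCard t).filter
              (fun T => ∀ j : Fin r, (T ∩ S j).Nonempty),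
            (⋂ k ∈ T, E k).indicator (1 : Ω → ℝ) ω) μ := by
    apply Integrable.add (hint _ hAmeas)
    apply integrable_finset_sum
    intro t ht
    exact integrable_finset_sum _ (fun T hT => hint _ (hmeas2 T))
  have hII := integral_mono hi1 hi2 key
  have e1 : ∫ ω, (∑ κ ∈ Fintype.piFinset S,
        (⋂ j, E (κ j)).indicator (1 : Ω → ℝ) ω) ∂μ
      = ∑ κ ∈ Fintype.piFinset S, (μ (⋂ j, E (κ j))).toReal := by
    rw [integral_finset_sum _ (fun κ _ => hint _ (hmeas1 κ))]
    exact Finset.sum_congr rfl fun κ _ => integral_indicator_one (hmeas1 κ)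
  have e2 : ∫ ω, (A.indicator (1 : Ω → ℝ) ω
        + ∑ t ∈ Finset.Icc (r + 1) (2 * r),
            ∑ T ∈ ((Finset.univ.biUnion S).powersetCard t).filter
                (fun T => ∀ j : Fin r, (T ∩ S j).Nonempty),
              (⋂ k ∈ T, E k).indicator (1 : Ω → ℝ) ω) ∂μ
      = (μ A).toReal + ∑ t ∈ Finset.Icc (r + 1) (2 * r),
          ∑ T ∈ ((Finset.univ.biUnion S).powersetCard t).filter
              (fun T => ∀ j : Fin r, (T ∩ S j).Nonempty),
            (μ (⋂ k ∈ T, E k)).toReal := by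
    rw [integral_add (hint _ hAmeas)
      (integrable_finset_sum _ (fun t _ =>
        integrable_finset_sum _ (fun T _ => hint _ (hmeas2 T))))]
    rw [integral_indicator_one hAmeas]
    congr 1
    rw [integral_finset_sum _ (fun t _ =>
      integrable_finset_sum _ (fun T _ => hint _ (hmeas2 T)))]
    refine Finset.sum_congr rfl fun t _ => ?_
    rw [integral_finset_sum _ (fun T _ => hint _ (hmeas2 T))]
    exact Finset.sum_congr rfl fun T _ => integral_indicator_one (hmeas2 T)
  rw [e1, e2] at hII
  linarith
end
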